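/- Under (LD1), if β₂ ≤ 1/(150κ), then 0.98·σ² ≤ σ̄² ≤ 1.02·σ², where σ̄² = ∑_{i∈J} E[X̄_i Ȳ_i] and β₂ = σ^{-2}·∑_{i∈J} E[X_i²·1{|X_i| > σ/κ}]. -/

import Mathlib

open MeasureTheory ProbabilityTheory

/-!
By (LD1) and centering, `σ² = ∑ᵢ ∑_{j ∈ Aᵢ} E[XᵢXⱼ]`, and `σ̄²` is the same double sum for the
truncated variables. Pointwise `|ab - āb̄| ≤ a²·1{|a| > t} + b²·1{|b| > t}`, so a pair with `i ∈ Aⱼ`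
costs at most `Eᵢ + Eⱼ`, `Eᵢ` being the tail second moment; as each `i` lies in at most `κ` of
the sets `Bⱼ ⊇ Aⱼ`, these pairs cost at most `2κ ∑ Eᵢ = 2κβ₂σ²`. For a pair with `i ∉ Aⱼ` the
variables are independent, the difference is `E[X̄ᵢ] E[X̄ⱼ]`, and centering gives
`t |E[X̄ᵢ]| ≤ Eᵢ`; these pairs cost at most `(κβ₂σ)²`. With `κβ₂ ≤ 1/150` the total is below
`0.02 σ²`.
-/

namespace LocalDependence

noncomputable def truncate (t y : ℝ) : ℝ := if |y| ≤ t then y else 0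

noncomputable def tailSq (t y : ℝ) : ℝ := if t < |y| then y ^ 2 else 0

variable {t : ℝ}

lemma abs_truncate_le_abs (y : ℝ) : |truncate t y| ≤ |y| := by
  unfold truncate; split_ifs <;> simp

lemma tailSq_nonneg (y : ℝ) : 0 ≤ tailSq t y := by
  unfold tailSq; split_ifs <;> positivity

lemma tailSq_le_sq (y : ℝ) : tailSq t y ≤ y ^ 2 := by
  unfold tailSq; split_ifs
  exacts [le_rfl, sq_nonneg y]

lemma mul_abs_sub_truncate_le (y : ℝ) : t * |y - truncate t y| ≤ tailSq t y := by
  unfold truncate tailSq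
  split_ifs with h₁ h₂ h₂
  · exact absurd h₁ (not_le.2 h₂)
  · simp
  · rw [sub_zero, ← sq_abs]; nlinarith [abs_nonneg y]
  · exact absurd (le_of_not_gt h₂) h₁

lemma abs_mul_sub_truncate_mul_le (a b : ℝ) :
    |a * b - truncate t a * truncate t b| ≤ tailSq t a + tailSq t b := by
  unfold truncate tailSq
  rcases le_or_gt |a| t with ha | ha <;> rcases le_or_gt |b| t with hb | hb <;>
    simp only [ha, hb, if_true, if_false, not_le.2, not_lt.2, mul_zero, zero_mul, sub_zero,
      sub_self, abs_zero, abs_mul, ← sq_abs a, ← sq_abs b] <;>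
    nlinarith [abs_nonneg a, abs_nonneg b]

lemma measurable_truncate : Measurable (truncate t) :=
  Measurable.ite (measurableSet_le measurable_abs measurable_const) measurable_id measurable_const

lemma measurable_tailSq : Measurable (tailSq t) :=
  Measurable.ite (measurableSet_lt measurable_const measurable_abs) (measurable_id.pow_const 2)
    measurable_const

section Counting

variable {ι : Type*} {J : Finset ι} {A B : ι → Finset ι}

lemma sum_sum_ite_mem_le [DecidableEq ι] {E : ι → ℝ} {κ : ℝ} (hE : ∀ i ∈ J, 0 ≤ E i)
    (hAJ : ∀ i ∈ J, A i ⊆ J) (hAB : ∀ i ∈ J, A i ⊆ B i)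
    (hcard : ∀ i ∈ J, ((J.filter fun j => i ∈ B j).card : ℝ) ≤ κ) :
    ∑ i ∈ J, ∑ j ∈ A i, (if i ∈ A j then E i + E j else 0) ≤ 2 * κ * ∑ i ∈ J, E i := by
  set N : ι → Finset ι := fun i => (A i).filter fun j => i ∈ A j
  have hsplit : ∑ i ∈ J, ∑ j ∈ A i, (if i ∈ A j then E i + E j else 0)
      = ∑ i ∈ J, ∑ j ∈ N i, E i + ∑ i ∈ J, ∑ j ∈ N i, E j := by
    simp only [N, Finset.sum_filter, ← Finset.sum_add_distrib, ← ite_add_zero]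
  have hsymm : ∑ i ∈ J, ∑ j ∈ N i, E j = ∑ j ∈ J, ∑ i ∈ N j, E j :=
    Finset.sum_comm' fun i j => by
      simp only [N, Finset.mem_filter]
      exact ⟨fun ⟨hi, hj, hij⟩ => ⟨⟨hij, hj⟩, hAJ i hi hj⟩,
        fun ⟨⟨hij, hj⟩, hjJ⟩ => ⟨hAJ j hjJ hij, hj, hij⟩⟩
  have hcount : ∀ i ∈ J, ∑ _j ∈ N i, E i ≤ κ * E i := fun i hi => by
    rw [Finset.sum_const, nsmul_eq_mul]
    refine mul_le_mul_of_nonneg_right ((Nat.cast_le.2 (Finset.card_le_card fun j hj => ?_)).trans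
      (hcard i hi)) (hE i hi)
    simp only [N, Finset.mem_filter] at hj ⊢
    exact ⟨hAJ i hi hj.1, hAB j (hAJ i hi hj.1) hj.2⟩
  rw [hsplit, hsymm, mul_assoc, two_mul, Finset.mul_sum]
  exact add_le_add (Finset.sum_le_sum hcount) (Finset.sum_le_sum hcount)

lemma sum_sum_mul_le_sq_sum {f : ι → ℝ} (hf : ∀ i ∈ J, 0 ≤ f i) (hAJ : ∀ i ∈ J, A i ⊆ J) :
    ∑ i ∈ J, ∑ j ∈ A i, f i * f j ≤ (∑ i ∈ J, f i) ^ 2 := by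
  rw [sq, Finset.sum_mul_sum]
  exact Finset.sum_le_sum fun i hi => Finset.sum_le_sum_of_subset_of_nonneg (hAJ i hi)
    fun j hj _ => mul_nonneg (hf i hi) (hf j hj)

end Counting

section Integrals

variable {Ω : Type*} [MeasurableSpace Ω] {μ : Measure Ω} {X Y : Ω → ℝ}

lemma memLp_truncate_comp {p : ENNReal} (hX : MemLp X p μ) :
    MemLp (fun ω => truncate t (X ω)) p μ :=
  hX.of_le (measurable_truncate.comp_aemeasurable hX.aemeasurable).aestronglyMeasurable
    (ae_of_all _ fun ω => by simpa only [Real.norm_eq_abs] using abs_truncate_le_abs (X ω))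

lemma integrable_tailSq_comp (hX : MemLp X 2 μ) : Integrable (fun ω => tailSq t (X ω)) μ :=
  hX.integrable_sq.mono'
    (measurable_tailSq.comp_aemeasurable hX.aemeasurable).aestronglyMeasurable
    (ae_of_all _ fun ω => by
      rw [Real.norm_eq_abs, abs_of_nonneg (tailSq_nonneg _)]
      exact tailSq_le_sq _)

lemma mul_abs_integral_truncate_le [IsFiniteMeasure μ] (ht : 0 ≤ t) (hX : MemLp X 2 μ)
    (hmean : ∫ ω, X ω ∂μ = 0) :
    t * |∫ ω, truncate t (X ω) ∂μ| ≤ ∫ ω, tailSq t (X ω) ∂μ := by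
  have hX₁ : Integrable X μ := hX.integrable one_le_two
  have hXt : Integrable (fun ω => truncate t (X ω)) μ :=
    (memLp_truncate_comp hX).integrable one_le_two
  have hshift : ∫ ω, truncate t (X ω) ∂μ = -∫ ω, (X ω - truncate t (X ω)) ∂μ := by
    rw [integral_sub hX₁ hXt, hmean, zero_sub, neg_neg]
  calc t * |∫ ω, truncate t (X ω) ∂μ| ≤ t * ∫ ω, |X ω - truncate t (X ω)| ∂μ := by
        rw [hshift, abs_neg]; gcongr; exact abs_integral_le_integral_abs
    _ = ∫ ω, t * |X ω - truncate t (X ω)| ∂μ := (integral_const_mul _ _).symm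
    _ ≤ ∫ ω, tailSq t (X ω) ∂μ :=
        integral_mono ((hX₁.sub hXt).abs.const_mul t) (integrable_tailSq_comp hX)
          fun ω => mul_abs_sub_truncate_le _

lemma abs_integral_mul_sub_integral_truncate_mul_le (hX : MemLp X 2 μ) (hY : MemLp Y 2 μ) :
    |∫ ω, X ω * Y ω ∂μ - ∫ ω, truncate t (X ω) * truncate t (Y ω) ∂μ|
      ≤ ∫ ω, tailSq t (X ω) ∂μ + ∫ ω, tailSq t (Y ω) ∂μ := by
  have hXY : Integrable (fun ω => X ω * Y ω) μ := hX.integrable_mul hY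
  have hXYt : Integrable (fun ω => truncate t (X ω) * truncate t (Y ω)) μ :=
    (memLp_truncate_comp hX).integrable_mul (memLp_truncate_comp hY)
  rw [← integral_sub hXY hXYt,
    ← integral_add (integrable_tailSq_comp hX) (integrable_tailSq_comp hY)]
  exact abs_integral_le_integral_abs.trans <| integral_mono (hXY.sub hXYt).abs
    ((integrable_tailSq_comp hX).add (integrable_tailSq_comp hY))
    fun ω => abs_mul_sub_truncate_mul_le _ _

lemma abs_integral_mul_sub_integral_truncate_mul_of_indepFun (h : IndepFun X Y μ)
    (hX : AEMeasurable X μ) (hY : AEMeasurable Y μ) (hmean : ∫ ω, X ω ∂μ = 0) :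
    |∫ ω, X ω * Y ω ∂μ - ∫ ω, truncate t (X ω) * truncate t (Y ω) ∂μ|
      = |∫ ω, truncate t (X ω) ∂μ| * |∫ ω, truncate t (Y ω) ∂μ| := by
  have htrunc : ∫ ω, truncate t (X ω) * truncate t (Y ω) ∂μ
      = (∫ ω, truncate t (X ω) ∂μ) * ∫ ω, truncate t (Y ω) ∂μ :=
    (h.comp measurable_truncate measurable_truncate).integral_fun_mul_eq_mul_integral
      (measurable_truncate.comp_aemeasurable hX).aestronglyMeasurable
      (measurable_truncate.comp_aemeasurable hY).aestronglyMeasurable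
  rw [h.integral_fun_mul_eq_mul_integral hX.aestronglyMeasurable hY.aestronglyMeasurable,
    htrunc, hmean, zero_mul, zero_sub, abs_neg, abs_mul]

lemma indepFun_of_indep_iSup_comap {ι β : Type*} [mβ : MeasurableSpace β] {X : ι → Ω → β}
    {i j : ι} {S : Finset ι}
    (h : Indep (MeasurableSpace.comap (X i) mβ) (⨆ k ∈ S, MeasurableSpace.comap (X k) mβ) μ)
    (hj : j ∈ S) : IndepFun (X i) (X j) μ :=
  (IndepFun_iff_Indep _ _ _).2 <| indep_of_indep_of_le_right h <|
    le_iSup₂ (f := fun k (_ : k ∈ S) => MeasurableSpace.comap (X k) mβ) j hj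

end Integrals

section SumsOfLocallyDependent

variable {Ω : Type*} [MeasurableSpace Ω] {μ : Measure Ω} {ι : Type*} {J : Finset ι}
  {A B : ι → Finset ι} {X : ι → Ω → ℝ}

lemma variance_sum_eq_sum_sum_integral_mul [IsProbabilityMeasure μ]
    (hL2 : ∀ i ∈ J, MemLp (X i) 2 μ) (hmean : ∀ i ∈ J, ∫ ω, X i ω ∂μ = 0)
    (hAJ : ∀ i ∈ J, A i ⊆ J) (hfar : ∀ i ∈ J, ∀ j ∈ J, j ∉ A i → IndepFun (X i) (X j) μ) :
    Var[fun ω => ∑ i ∈ J, X i ω; μ] = ∑ i ∈ J, ∑ j ∈ A i, ∫ ω, X i ω * X j ω ∂μ := by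
  classical
  rw [variance_fun_sum' hL2]
  refine Finset.sum_congr rfl fun i hi => ?_
  rw [← Finset.sum_sdiff (hAJ i hi), Finset.sum_eq_zero fun j hj => ?_, zero_add]
  · refine Finset.sum_congr rfl fun j hj => ?_
    rw [covariance_eq_sub (hL2 i hi) (hL2 j (hAJ i hi hj)), hmean i hi, zero_mul, sub_zero]
    rfl
  · rw [Finset.mem_sdiff] at hj
    exact (hfar i hi j hj.1 hj.2).covariance_eq_zero (hL2 i hi) (hL2 j hj.1)

lemma abs_integral_mul_sub_integral_truncate_mul_le_of_mem [DecidableEq ι]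
    (hL2 : ∀ i ∈ J, MemLp (X i) 2 μ) (hmean : ∀ i ∈ J, ∫ ω, X i ω ∂μ = 0)
    (hAJ : ∀ i ∈ J, A i ⊆ J) (hfar : ∀ i ∈ J, ∀ j ∈ J, j ∉ A i → IndepFun (X i) (X j) μ)
    {i j : ι} (hi : i ∈ J) (hj : j ∈ A i) :
    |∫ ω, X i ω * X j ω ∂μ - ∫ ω, truncate t (X i ω) * truncate t (X j ω) ∂μ|
      ≤ (if i ∈ A j then ∫ ω, tailSq t (X i ω) ∂μ + ∫ ω, tailSq t (X j ω) ∂μ else 0)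
        + |∫ ω, truncate t (X i ω) ∂μ| * |∫ ω, truncate t (X j ω) ∂μ| := by
  have hjJ := hAJ i hi hj
  split_ifs with hij
  · exact le_add_of_le_of_nonneg
      (abs_integral_mul_sub_integral_truncate_mul_le (hL2 i hi) (hL2 j hjJ)) (by positivity)
  · rw [zero_add, mul_comm |∫ ω, truncate t (X i ω) ∂μ|]
    simp_rw [mul_comm (X i _), mul_comm (truncate t (X i _))]
    exact (abs_integral_mul_sub_integral_truncate_mul_of_indepFun (hfar j hjJ i hi hij)
      (hL2 j hjJ).aemeasurable (hL2 i hi).aemeasurable (hmean j hjJ)).le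

theorem abs_variance_sub_sum_integral_truncate_mul_le [IsProbabilityMeasure μ] [DecidableEq ι]
    {κ : ℝ} (ht : 0 < t)
    (hL2 : ∀ i ∈ J, MemLp (X i) 2 μ) (hmean : ∀ i ∈ J, ∫ ω, X i ω ∂μ = 0)
    (hAJ : ∀ i ∈ J, A i ⊆ J) (hAB : ∀ i ∈ J, A i ⊆ B i)
    (hfar : ∀ i ∈ J, ∀ j ∈ J, j ∉ A i → IndepFun (X i) (X j) μ)
    (hcard : ∀ i ∈ J, ((J.filter fun j => i ∈ B j).card : ℝ) ≤ κ) :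
    |Var[fun ω => ∑ i ∈ J, X i ω; μ]
        - ∑ i ∈ J, ∫ ω, truncate t (X i ω) * ∑ j ∈ A i, truncate t (X j ω) ∂μ|
      ≤ 2 * κ * ∑ i ∈ J, ∫ ω, tailSq t (X i ω) ∂μ
        + ((∑ i ∈ J, ∫ ω, tailSq t (X i ω) ∂μ) / t) ^ 2 := by
  set E : ι → ℝ := fun i => ∫ ω, tailSq t (X i ω) ∂μ
  set q : ι → ℝ := fun i => ∫ ω, truncate t (X i ω) ∂μ
  have hexpand : ∀ i ∈ J, ∫ ω, truncate t (X i ω) * ∑ j ∈ A i, truncate t (X j ω) ∂μ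
      = ∑ j ∈ A i, ∫ ω, truncate t (X i ω) * truncate t (X j ω) ∂μ := fun i hi => by
    simp_rw [Finset.mul_sum]
    exact integral_finsetSum _ fun j hj => (memLp_truncate_comp (hL2 i hi)).integrable_mul
      (memLp_truncate_comp (hL2 j (hAJ i hi hj)))
  have hq : ∑ i ∈ J, |q i| ≤ (∑ i ∈ J, E i) / t := by
    rw [le_div_iff₀ ht, Finset.sum_mul]
    refine Finset.sum_le_sum fun i hi => ?_
    rw [mul_comm]
    exact mul_abs_integral_truncate_le ht.le (hL2 i hi) (hmean i hi)
  rw [variance_sum_eq_sum_sum_integral_mul hL2 hmean hAJ hfar, Finset.sum_congr rfl hexpand,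
    ← Finset.sum_sub_distrib]
  calc _ ≤ ∑ i ∈ J, ∑ j ∈ A i, ((if i ∈ A j then E i + E j else 0) + |q i| * |q j|) := by
        refine (Finset.abs_sum_le_sum_abs _ _).trans (Finset.sum_le_sum fun i hi => ?_)
        rw [← Finset.sum_sub_distrib]
        exact (Finset.abs_sum_le_sum_abs _ _).trans (Finset.sum_le_sum fun j hj =>
          abs_integral_mul_sub_integral_truncate_mul_le_of_mem hL2 hmean hAJ hfar hi hj)
    _ = ∑ i ∈ J, ∑ j ∈ A i, (if i ∈ A j then E i + E j else 0)
          + ∑ i ∈ J, ∑ j ∈ A i, |q i| * |q j| := by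
        simp only [Finset.sum_add_distrib]
    _ ≤ 2 * κ * ∑ i ∈ J, E i + (∑ i ∈ J, |q i|) ^ 2 :=
        add_le_add (sum_sum_ite_mem_le (fun i _ => integral_nonneg fun _ => tailSq_nonneg _)
          hAJ hAB hcard) (sum_sum_mul_le_sq_sum (fun i _ => abs_nonneg _) hAJ)
    _ ≤ _ := by gcongr

end SumsOfLocallyDependent

end LocalDependence

open LocalDependence

theorem truncated_variance_comparable_general
    {Ω : Type*} [MeasureSpace Ω] [IsProbabilityMeasure (ℙ : Measure Ω)]
    {ι : Type*} [DecidableEq ι] (J : Finset ι) (X : ι → Ω → ℝ)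
    (A B : ι → Finset ι)
    (hL2 : ∀ i ∈ J, MemLp (X i) 2 ℙ)
    (hmean : ∀ i ∈ J, (∫ ω, X i ω) = 0)
    (hAJ : ∀ i ∈ J, A i ⊆ J) (hAB : ∀ i ∈ J, A i ⊆ B i)
    -- (LD1): `X i` is independent of `{X j : j ∉ A i}`
    (hLD1 : ∀ i ∈ J, Indep (MeasurableSpace.comap (X i) inferInstance)
      (⨆ j ∈ J \ A i, MeasurableSpace.comap (X j) inferInstance) ℙ)
    (σ κ : ℝ) (hσ : 0 < σ) (hκ : 1 ≤ κ)
    (hσdef : σ ^ 2 = variance (fun ω => ∑ i ∈ J, X i ω) ℙ)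
    (hκcard : ∀ i ∈ J, ((J.filter fun j => i ∈ B j).card : ℝ) ≤ κ)
    -- truncated variables
    (Xb : ι → Ω → ℝ) (hXb : ∀ i, Xb i = fun ω => if |X i ω| ≤ σ / κ then X i ω else 0)
    (Yb : ι → Ω → ℝ) (hYb : ∀ i, Yb i = fun ω => ∑ j ∈ A i, Xb j ω)
    (σbar2 β₂ : ℝ)
    (hσbar2 : σbar2 = ∑ i ∈ J, ∫ ω, Xb i ω * Yb i ω)
    (hβ₂ : β₂ = σ⁻¹ ^ 2 * ∑ i ∈ J, ∫ ω, (if σ / κ < |X i ω| then (X i ω) ^ 2 else 0))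
    (hβ₂small : β₂ ≤ 1 / (150 * κ)) :
    0.98 * σ ^ 2 ≤ σbar2 ∧ σbar2 ≤ 1.02 * σ ^ 2 := by
  have hκ₀ : 0 < κ := one_pos.trans_le hκ
  have hfar : ∀ i ∈ J, ∀ j ∈ J, j ∉ A i → IndepFun (X i) (X j) ℙ := fun i hi j hj hji =>
    indepFun_of_indep_iSup_comap (hLD1 i hi) (Finset.mem_sdiff.2 ⟨hj, hji⟩)
  have hσbar : σbar2
      = ∑ i ∈ J, ∫ ω, truncate (σ / κ) (X i ω) * ∑ j ∈ A i, truncate (σ / κ) (X j ω) := by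
    simp only [hσbar2, hYb, hXb]; rfl
  have hbound := abs_variance_sub_sum_integral_truncate_mul_le (div_pos hσ hκ₀) hL2 hmean hAJ
    hAB hfar hκcard
  rw [← hσdef, ← hσbar] at hbound
  set S := ∑ i ∈ J, ∫ ω, tailSq (σ / κ) (X i ω)
  have hS₀ : 0 ≤ S := Finset.sum_nonneg fun i _ => integral_nonneg fun _ => tailSq_nonneg _
  have hκS : κ * S ≤ σ ^ 2 / 150 := by
    have h : σ⁻¹ ^ 2 * S ≤ 1 / (150 * κ) := hβ₂ ▸ hβ₂small
    field_simp at h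
    linarith
  have hS_div : S / (σ / κ) = κ * S / σ := by field_simp
  rw [hS_div] at hbound
  have hsq : (κ * S / σ) ^ 2 ≤ (σ / 150) ^ 2 := by
    refine pow_le_pow_left₀ (by positivity) ?_ 2
    rw [div_le_iff₀ hσ]
    linarith
  rw [abs_le] at hbound
  constructor <;> linarith

/-- Under (LD1), if `β₂ ≤ 1/(150κ)`, then `0.98·σ² ≤ σ̄² ≤ 1.02·σ²`. -/
theorem truncated_variance_comparable
    {Ω : Type*} [MeasureSpace Ω] [IsProbabilityMeasure (ℙ : Measure Ω)]
    {ι : Type*} [DecidableEq ι] (J : Finset ι) (X : ι → Ω → ℝ)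
    (A B : ι → Finset ι)
    (hmeas : ∀ i, Measurable (X i))
    (hL2 : ∀ i ∈ J, MemLp (X i) 2 ℙ)
    (hmean : ∀ i ∈ J, (∫ ω, X i ω) = 0)
    (hiA : ∀ i ∈ J, i ∈ A i) (hAJ : ∀ i ∈ J, A i ⊆ J) (hAB : ∀ i ∈ J, A i ⊆ B i)
    -- (LD1): `X i` is independent of `{X j : j ∉ A i}`
    (hLD1 : ∀ i ∈ J, Indep (MeasurableSpace.comap (X i) inferInstance)
      (⨆ j ∈ J \ A i, MeasurableSpace.comap (X j) inferInstance) ℙ)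
    (σ κ : ℝ) (hσ : 0 < σ) (hκ : 1 ≤ κ)
    (hσdef : σ ^ 2 = variance (fun ω => ∑ i ∈ J, X i ω) ℙ)
    (hκcard : ∀ i ∈ J, ((J.filter fun j => i ∈ B j).card : ℝ) ≤ κ)
    -- truncated variables
    (Xb : ι → Ω → ℝ) (hXb : ∀ i, Xb i = fun ω => if |X i ω| ≤ σ / κ then X i ω else 0)
    (Yb : ι → Ω → ℝ) (hYb : ∀ i, Yb i = fun ω => ∑ j ∈ A i, Xb j ω)
    (σbar2 β₂ : ℝ)
    (hσbar2 : σbar2 = ∑ i ∈ J, ∫ ω, Xb i ω * Yb i ω)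
    (hβ₂ : β₂ = σ⁻¹ ^ 2 * ∑ i ∈ J, ∫ ω, (if σ / κ < |X i ω| then (X i ω) ^ 2 else 0))
    (hβ₂small : β₂ ≤ 1 / (150 * κ)) :
    0.98 * σ ^ 2 ≤ σbar2 ∧ σbar2 ≤ 1.02 * σ ^ 2 :=
  truncated_variance_comparable_general J X A B hL2 hmean hAJ hAB hLD1 σ κ hσ hκ hσdef hκcard Xb hXb
    Yb hYb σbar2 β₂ hσbar2 hβ₂ hβ₂small
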